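/- arXiv:1008.1622 — 3 statements merged into one kernel-verified Lean document; each statement's English description precedes it below -/
import Mathlib

section
/- Let n ≥ 2, let z_1, …, z_n be arbitrary vectors in ℝ^m, set s_j := z_{j+1} − z_j with indices taken mod n (z_{n+1} := z_1), and let μ be a permutation of {1, …, n}. Then for every k ∈ {1, …, n−1} there exist nonpositive integers λ_1, …, λ_{n−1} such that Σ_{j=1}^{k} s_{μ(j)} = Σ_{j=1}^{n−1} λ_j (z_{μ(j)} − z_{μ(j+1)}). -/
/-!
Write `w = z ∘ μ`. Then `s_{μ(j)} = w (r j) - w j` for the conjugate rotation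
`r = μ⁻¹ ∘ (i ↦ i + 1) ∘ μ`, and telescoping along `0, 1, …, n - 1` gives
`w (r j) - w j = ∑ t, ([t < j] - [t < r j]) (w t - w (t + 1))`. Summing over `j < k`, the
coefficient of `w t - w (t + 1)` is `#{j < k | t < j} - #{j < k | t < r j}`. It is nonpositive
because the injective `r` sends at most `min k (t + 1)` indices `j < k` into `{0, …, t}`, while
exactly `min k (t + 1)` of them lie there themselves.
-/

open Filter Topology

noncomputable section

/-- The monomial `x^z = ∏ l, x l ^ z l`. -/
def mono {m : ℕ} (zv : Fin m → ℕ) (x : Fin m → ℝ) : ℝ := ∏ l, x l ^ zv l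

/-- The ratio monomial `(x/x*)^z = ∏ l, (x l / x* l) ^ z l`. -/
def ratio {m : ℕ} (xstar x : Fin m → ℝ) (zv : Fin m → ℕ) : ℝ :=
  ∏ l, (x l / xstar l) ^ zv l

/-- The mass-action vector field `f(x) = Σ_{i,j} k(i,j) (z_j - z_i) x^{z_i}`
(terms with `k i j = 0` vanish, so this is the sum over reactions). -/
def maf {m n : ℕ} (z : Fin n → Fin m → ℕ) (k : Fin n → Fin n → ℝ) (x : Fin m → ℝ) :
    Fin m → ℝ :=
  fun l => ∑ i, ∑ j, k i j * ((z j l : ℝ) - (z i l : ℝ)) * mono (z i) x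

/-- `x*` is a complex balanced equilibrium. -/
def complexBalanced {m n : ℕ} (z : Fin n → Fin m → ℕ) (k : Fin n → Fin n → ℝ)
    (xstar : Fin m → ℝ) : Prop :=
  ∀ i, ∑ j, k j i * mono (z j) xstar = mono (z i) xstar * ∑ j, k i j

/-- Cyclic successor on `Fin n`. -/
def cyc {n : ℕ} (i : Fin n) : Fin n := ⟨(i.val + 1) % n, Nat.mod_lt _ i.pos⟩

/-- The system is cyclic: its reactions are exactly `C_i → C_{i+1}` (cyclically). -/
def isCyclic {n : ℕ} (k : Fin n → Fin n → ℝ) : Prop :=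
  (∀ i, 0 < k i (cyc i)) ∧ ∀ i j, j ≠ cyc i → k i j = 0

/-- Inclusion `Fin (n-1) → Fin n`. -/
def emb {n : ℕ} (i : Fin (n - 1)) : Fin n := ⟨i.val, by have := i.isLt; omega⟩

/-- Successor inclusion `Fin (n-1) → Fin n`, `i ↦ i+1`. -/
def embS {n : ℕ} (i : Fin (n - 1)) : Fin n := ⟨i.val + 1, by have := i.isLt; omega⟩

/-- The stratum associated with a permutation `μ` of the complexes. -/
def stratum {m n : ℕ} (z : Fin n → Fin m → ℕ) (xstar : Fin m → ℝ)
    (μ : Equiv.Perm (Fin n)) : Set (Fin m → ℝ) :=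
  {x | (∀ l, 0 < x l) ∧
    ∀ i : Fin (n - 1), ratio xstar x (z (μ (emb i))) > ratio xstar x (z (μ (embS i)))}

/-- `L_I`: the relative interior of the face of the nonnegative orthant given by `I`. -/
def LI {m : ℕ} (I : Finset (Fin m)) : Set (Fin m → ℝ) :=
  {x | (∀ i ∈ I, x i = 0) ∧ ∀ i ∉ I, 0 < x i}

/-- Semi-locking set. -/
def semiLocking {m n : ℕ} (z : Fin n → Fin m → ℕ) (k : Fin n → Fin n → ℝ)
    (I : Finset (Fin m)) : Prop :=
  I.Nonempty ∧ ∀ i j : Fin n, 0 < k i j → (∃ l ∈ I, 0 < z j l) → ∃ l ∈ I, 0 < z i l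

/-- The stoichiometric subspace. -/
def stoich {m n : ℕ} (z : Fin n → Fin m → ℕ) (k : Fin n → Fin n → ℝ) :
    Submodule ℝ (Fin m → ℝ) :=
  Submodule.span ℝ {v | ∃ i j : Fin n, 0 < k i j ∧ v = fun l => (z j l : ℝ) - (z i l : ℝ)}

open Finset

lemma cyc_eq_finRotate {n : ℕ} : (cyc : Fin n → Fin n) = finRotate n := by
  funext i
  cases n with
  | zero => exact i.elim0
  | succ n =>
    ext
    rw [coe_finRotate]
    split_ifs with h
    · simp [cyc, h]
    · exact Nat.mod_eq_of_lt (by have := Fin.val_lt_last h; omega)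

section Telescoping

variable {M : Type*} [AddCommGroup M] {n : ℕ}

lemma sum_filter_val_lt_sub (w : Fin n → M) (q : Fin n) :
    ∑ t ∈ univ.filter (fun t : Fin (n - 1) => t.val < q.val), (w (embS t) - w (emb t))
      = w q - w ⟨0, q.pos⟩ := by
  set f : ℕ → M := fun i => if h : i < n then w ⟨i, h⟩ else 0
  have hrange : (univ.filter (fun t : Fin (n - 1) => t.val < q.val)).map Fin.valEmbedding
      = range q := by
    ext i
    simp only [Finset.mem_map, mem_filter, mem_univ, true_and, Fin.valEmbedding_apply, mem_range]
    exact ⟨fun ⟨t, ht, hti⟩ => hti ▸ ht, fun hi => ⟨⟨i, by omega⟩, hi, rfl⟩⟩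
  calc ∑ t ∈ univ.filter (fun t : Fin (n - 1) => t.val < q.val), (w (embS t) - w (emb t))
      = ∑ t ∈ univ.filter (fun t : Fin (n - 1) => t.val < q.val),
          (f (Fin.valEmbedding t + 1) - f (Fin.valEmbedding t)) := by
        refine sum_congr rfl fun t _ => ?_
        simp [f, emb, embS, Nat.lt_of_lt_pred t.isLt, Nat.add_lt_of_lt_sub t.isLt]
    _ = w q - w ⟨0, q.pos⟩ := by
        rw [← sum_map _ _ (fun i => f (i + 1) - f i), hrange, sum_range_sub]
        simp [f, q.pos]

lemma sum_sum_filter_eq_sum_card_smul {α β : Type*} [Fintype β] (s : Finset α)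
    (p : β → α → Prop) [∀ b a, Decidable (p b a)] (f : β → M) :
    ∑ a ∈ s, ∑ b ∈ univ.filter (fun b => p b a), f b = ∑ b, #(s.filter (p b)) • f b := by
  simp_rw [sum_filter]
  rw [sum_comm]
  simp [← sum_filter, sum_const]

theorem sum_sub_eq_sum_zsmul_sub (w : Fin n → M) (r : Fin n → Fin n) (J : Finset (Fin n)) :
    ∑ j ∈ J, (w (r j) - w j)
      = ∑ t : Fin (n - 1), ((#(J.filter fun j => t.val < j.val) : ℤ)
          - #(J.filter fun j => t.val < (r j).val)) • (w (emb t) - w (embS t)) := by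
  set d : Fin (n - 1) → M := fun t => w (embS t) - w (emb t)
  calc ∑ j ∈ J, (w (r j) - w j)
      = ∑ j ∈ J, ((∑ t ∈ univ.filter (fun t : Fin (n - 1) => t.val < (r j).val), d t)
          - ∑ t ∈ univ.filter (fun t : Fin (n - 1) => t.val < j.val), d t) := by
        refine sum_congr rfl fun j _ => ?_
        rw [sum_filter_val_lt_sub, sum_filter_val_lt_sub]
        abel
    _ = _ := by
        rw [sum_sub_distrib, sum_sum_filter_eq_sum_card_smul, sum_sum_filter_eq_sum_card_smul,
          ← sum_sub_distrib]
        refine sum_congr rfl fun t _ => ?_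
        simp only [d, sub_smul, natCast_zsmul, smul_sub]
        abel

end Telescoping

lemma card_filter_lt_val_le_card_filter_lt_apply {n : ℕ} {r : Fin n → Fin n}
    (hr : Function.Injective r) (k t : ℕ) :
    #((univ.filter fun j : Fin n => j.val < k).filter fun j => t < j.val)
      ≤ #((univ.filter fun j : Fin n => j.val < k).filter fun j => t < (r j).val) := by
  set J := univ.filter fun j : Fin n => j.val < k
  have hJ := card_filter_add_card_filter_not (s := J) (fun j => t < j.val)
  have hrJ := card_filter_add_card_filter_not (s := J) (fun j => t < (r j).val)
  suffices #(J.filter fun j => ¬ t < (r j).val) ≤ #(J.filter fun j => ¬ t < j.val) by omega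
  by_cases hkt : k ≤ t
  · have : J.filter (fun j => ¬ t < j.val) = J := by
      refine filter_true_of_mem fun j hj => ?_
      simp only [J, mem_filter] at hj
      omega
    rw [this]
    exact card_le_card (filter_subset _ _)
  · have : J.filter (fun j => ¬ t < j.val) = univ.filter (fun j : Fin n => ¬ t < j.val) := by
      ext j
      simp only [J, mem_filter, mem_univ, true_and]
      omega
    rw [this]
    exact card_le_card_of_injOn r (fun j hj => by simp_all) hr.injOn

theorem stmt4_general {m n : ℕ} (z : Fin n → Fin m → ℝ) (μ : Equiv.Perm (Fin n)) :
    ∀ kk : ℕ, 1 ≤ kk → kk ≤ n - 1 →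
      ∃ lam : Fin (n - 1) → ℤ, (∀ j, lam j ≤ 0) ∧
        ∀ l : Fin m,
          ∑ j ∈ Finset.univ.filter (fun j : Fin n => j.val < kk),
              (z (cyc (μ j)) l - z (μ j) l)
            = ∑ j : Fin (n - 1), (lam j : ℝ) * (z (μ (emb j)) l - z (μ (embS j)) l) := by
  intro kk _ _
  set J := univ.filter fun j : Fin n => j.val < kk
  set r : Equiv.Perm (Fin n) := μ.trans ((finRotate n).trans μ.symm)
  have hcyc (j : Fin n) : cyc (μ j) = μ (r j) := by simp [r, cyc_eq_finRotate]
  refine ⟨fun t => #(J.filter fun j => t.val < j.val) - #(J.filter fun j => t.val < (r j).val),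
    fun t => sub_nonpos.mpr (Nat.cast_le.mpr
      (card_filter_lt_val_le_card_filter_lt_apply r.injective kk t)), fun l => ?_⟩
  have h := congrFun (sum_sub_eq_sum_zsmul_sub (z ∘ μ) r J) l
  simp only [Finset.sum_apply, Pi.smul_apply, Pi.sub_apply, Function.comp_apply] at h
  simp only [zsmul_eq_mul] at h
  simpa only [hcyc] using h

/-- for arbitrary vectors `z_1, …, z_n ∈ ℝ^m`, `s_j := z_{j+1} - z_j`
(indices mod `n`) and any permutation `μ`, every partial sum `Σ_{j=1}^k s_{μ(j)}`
(`1 ≤ k ≤ n-1`) is a nonpositive-integer combination of the vectors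
`z_{μ(j)} - z_{μ(j+1)}`, `j = 1, …, n-1`. -/
theorem stmt4 {m n : ℕ} (hn : 2 ≤ n) (z : Fin n → Fin m → ℝ) (μ : Equiv.Perm (Fin n)) :
    ∀ kk : ℕ, 1 ≤ kk → kk ≤ n - 1 →
      ∃ lam : Fin (n - 1) → ℤ, (∀ j, lam j ≤ 0) ∧
        ∀ l : Fin m,
          ∑ j ∈ Finset.univ.filter (fun j : Fin n => j.val < kk),
              (z (cyc (μ j)) l - z (μ j) l)
            = ∑ j : Fin (n - 1), (lam j : ℝ) * (z (μ (emb j)) l - z (μ (embS j)) l) :=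
  stmt4_general z μ
end
end

section
/- Let n ≥ 2, let z_1, …, z_n be arbitrary vectors in ℝ^m, set s_j := z_{j+1} − z_j with indices taken mod n (z_{n+1} := z_1), and let μ be a permutation of {1, …, n}. If α ∈ ℝ^m satisfies ⟨z_{μ(j)} − z_{μ(j+1)}, α⟩ ≥ 0 for all j = 1, …, n−1, then ⟨α, Σ_{j=1}^{k} s_{μ(j)}⟩ ≤ 0 for every k = 1, …, n−1. -/
open Filter Topology

noncomputable section

/-!
Write `a i = ⟨z i, α⟩`. The hypothesis says that `a ∘ μ` is antitone, so `S = μ {1, …, k}` is a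
set of `k` indices on which `a` is at least the value `a (μ k)`, while `a` is at most that value
off `S`. The sum in question is `∑ x ∈ S, (a (x + 1) - a x)`, and the cyclic shift of `S` is
another set of `k` indices, so its `a`-sum cannot exceed that of `S`.
-/

open Finset in
theorem Finset.sum_le_sum_of_card_eq_of_threshold {ι M : Type*} [DecidableEq ι]
    [AddCommMonoid M] [PartialOrder M] [IsOrderedAddMonoid M]
    {s t : Finset ι} {f : ι → M} {c : M} (hcard : #t = #s)
    (hs : ∀ x ∈ s, c ≤ f x) (hsc : ∀ x ∉ s, f x ≤ c) :
    ∑ x ∈ t, f x ≤ ∑ x ∈ s, f x := by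
  have hsdiff : #(t \ s) = #(s \ t) := by
    have hts := card_sdiff_add_card_inter t s
    have hst := card_sdiff_add_card_inter s t
    rw [inter_comm] at hts
    omega
  rw [← sum_inter_add_sum_sdiff t s, ← sum_inter_add_sum_sdiff s t, inter_comm]
  refine add_le_add le_rfl ?_
  calc ∑ x ∈ t \ s, f x
      ≤ #(t \ s) • c := sum_le_card_nsmul _ _ _ fun x hx => hsc x (mem_sdiff.1 hx).2
    _ = #(s \ t) • c := by rw [hsdiff]
    _ ≤ ∑ x ∈ s \ t, f x := card_nsmul_le_sum _ _ _ fun x hx => hs x (mem_sdiff.1 hx).1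

theorem Finset.sum_comp_sub_nonpos_of_threshold {ι M : Type*} [DecidableEq ι]
    [AddCommGroup M] [PartialOrder M] [IsOrderedAddMonoid M]
    {s : Finset ι} {σ : ι → ι} (hσ : Function.Injective σ) {f : ι → M} {c : M}
    (hs : ∀ x ∈ s, c ≤ f x) (hsc : ∀ x ∉ s, f x ≤ c) :
    ∑ x ∈ s, (f (σ x) - f x) ≤ 0 := by
  rw [sum_sub_distrib, sub_nonpos, ← sum_image hσ.injOn]
  exact sum_le_sum_of_card_eq_of_threshold (card_image_of_injective s hσ) hs hsc

theorem cyc_injective {n : ℕ} : Function.Injective (cyc (n := n)) := by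
  intro i j h
  have h' : (i.val + 1) % n = (j.val + 1) % n := congrArg Fin.val h
  ext
  rcases i with ⟨i, hi⟩
  rcases j with ⟨j, hj⟩
  simp only at h' ⊢
  rcases (Nat.succ_le_of_lt hi).eq_or_lt with rfl | hi' <;>
  rcases (Nat.succ_le_of_lt hj).eq_or_lt with hj' | hj' <;>
    simp_all [Nat.mod_eq_of_lt]

theorem antitone_of_forall_embS_le_emb {α : Type*} [Preorder α] {n : ℕ} {f : Fin n → α}
    (h : ∀ j : Fin (n - 1), f (embS j) ≤ f (emb j)) : Antitone f := by
  cases n with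
  | zero => exact fun i => i.elim0
  | succ n => exact Fin.antitone_iff_succ_le.2 h

theorem stmt5_general {m n : ℕ} (z : Fin n → Fin m → ℝ) (μ : Equiv.Perm (Fin n))
    (α : Fin m → ℝ)
    (hα : ∀ j : Fin (n - 1), 0 ≤ ∑ l, (z (μ (emb j)) l - z (μ (embS j)) l) * α l) :
    ∀ kk : ℕ, 1 ≤ kk → kk ≤ n - 1 →
      (∑ l, α l * ∑ j ∈ Finset.univ.filter (fun j : Fin n => j.val < kk),
          (z (cyc (μ j)) l - z (μ j) l)) ≤ 0 := by
  intro kk hk1 hk2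
  set a : Fin n → ℝ := fun i => ∑ l, z i l * α l
  have ha : Antitone (a ∘ μ) := antitone_of_forall_embS_le_emb fun j => by
    have := hα j
    simp only [sub_mul, Finset.sum_sub_distrib] at this
    simp only [Function.comp, a]
    linarith
  set S := (Finset.univ.filter fun j : Fin n => j.val < kk).map μ.toEmbedding
  have hS : ∀ x, x ∈ S ↔ (μ.symm x).val < kk := by simp [S, Finset.mem_map_equiv]
  have hsum : (∑ l, α l * ∑ j ∈ Finset.univ.filter (fun j : Fin n => j.val < kk),
      (z (cyc (μ j)) l - z (μ j) l)) = ∑ x ∈ S, (a (cyc x) - a x) := by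
    rw [Finset.sum_map]
    simp only [Finset.mul_sum, Equiv.toEmbedding_apply, a, ← Finset.sum_sub_distrib]
    rw [Finset.sum_comm]
    exact Finset.sum_congr rfl fun j _ => Finset.sum_congr rfl fun l _ => by ring
  have hkk : kk - 1 < n := by omega
  rw [hsum]
  refine Finset.sum_comp_sub_nonpos_of_threshold cyc_injective (c := a (μ ⟨kk - 1, hkk⟩))
    (fun x hx => ?_) (fun x hx => ?_) <;> rw [hS] at hx
  · have hle : μ.symm x ≤ ⟨kk - 1, hkk⟩ := Fin.le_iff_val_le_val.2 (by simp; omega)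
    simpa using ha hle
  · have hle : ⟨kk - 1, hkk⟩ ≤ μ.symm x := Fin.le_iff_val_le_val.2 (by simp; omega)
    simpa using ha hle

/-- with `s_j := z_{j+1} - z_j` (indices mod `n`), if
`⟨z_{μ(j)} - z_{μ(j+1)}, α⟩ ≥ 0` for `j = 1, …, n-1`, then
`⟨α, Σ_{j=1}^k s_{μ(j)}⟩ ≤ 0` for every `k = 1, …, n-1`. -/
theorem stmt5 {m n : ℕ} (hn : 2 ≤ n) (z : Fin n → Fin m → ℝ) (μ : Equiv.Perm (Fin n))
    (α : Fin m → ℝ)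
    (hα : ∀ j : Fin (n - 1), 0 ≤ ∑ l, (z (μ (emb j)) l - z (μ (embS j)) l) * α l) :
    ∀ kk : ℕ, 1 ≤ kk → kk ≤ n - 1 →
      (∑ l, α l * ∑ j ∈ Finset.univ.filter (fun j : Fin n => j.val < kk),
          (z (cyc (μ j)) l - z (μ j) l)) ≤ 0 :=
  stmt5_general z μ α hα
end
end

section
/- Let z_1, …, z_n ∈ ℤ_{≥0}^m be pairwise distinct (n ≥ 1), let x* ∈ ℝ_{>0}^m, let I ⊆ {1, …, m} be nonempty, and let M_I denote the set of permutations μ of {1, …, n} such that cl(S_μ) ∩ L_I ≠ ∅. Then for every compact subset K of L_I there exists a relatively open neighbourhood U of K in ℝ_{≥0}^m such that U ⊆ ∪_{μ ∈ M_I} cl(S_μ). -/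
/-!
Every point of the closed orthant lies in the closure of some stratum: positive points at which
the values `(x/x*)^{z_i}` are pairwise distinct are dense, because along a curve
`t ↦ x * exp (t w)` with pairwise distinct `⟨z_i, w⟩` at most finitely many of these values
coincide. Hence one may take `U` to be the complement of the (finitely many, closed) closures of
strata that miss `L_I`; it contains every subset of `L_I`.
-/

open Filter Topology

noncomputable section

open Function

theorem exists_weight_injective_sum_mul {ι : Type*} [Finite ι] {m : ℕ}
    {z : ι → Fin m → ℕ} (hz : Injective z) :
    ∃ w : Fin m → ℝ, Injective fun i => ∑ l, (z i l : ℝ) * w l := by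
  obtain ⟨B, hB⟩ := Finite.exists_le fun p : ι × Fin m => z p.1 p.2
  let digits : ι → Fin m → Fin (B + 1) := fun i l => ⟨z i l, Nat.lt_succ_of_le (hB (i, l))⟩
  -- with weights `(B+1)^l`, the sum is the base-`(B+1)` number with digits `z i`
  refine ⟨fun l => ((B + 1) ^ (l : ℕ) : ℕ), fun i j hij => hz ?_⟩
  have hdigits : finFunctionFinEquiv (digits i) = finFunctionFinEquiv (digits j) := by
    apply Fin.ext
    show ∑ l, z i l * (B + 1) ^ (l : ℕ) = ∑ l, z j l * (B + 1) ^ (l : ℕ)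
    simp only at hij
    exact_mod_cast hij
  funext l
  exact congrArg Fin.val (congrFun (finFunctionFinEquiv.injective hdigits) l)

theorem finite_setOf_not_injective_mul_exp {ι : Type*} [Finite ι] {a c : ι → ℝ}
    (ha : ∀ i, 0 < a i) (hc : Injective c) :
    {t : ℝ | ¬Injective fun i => a i * Real.exp (t * c i)}.Finite := by
  refine (Set.finite_range fun p : ι × ι =>
    (Real.log (a p.2) - Real.log (a p.1)) / (c p.1 - c p.2)).subset ?_
  intro t ht
  obtain ⟨i, j, hij, hne⟩ := not_injective_iff.1 ht
  refine ⟨(i, j), ?_⟩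
  have hc' : c i - c j ≠ 0 := sub_ne_zero.2 (hc.ne hne)
  have hlog : Real.log (a i) + t * c i = Real.log (a j) + t * c j := by
    rw [← Real.exp_eq_exp, Real.exp_add, Real.exp_add, Real.exp_log (ha i),
      Real.exp_log (ha j)]
    exact hij
  field_simp
  linarith

theorem exists_perm_strictAnti {α : Type*} [LinearOrder α] {n : ℕ} {f : Fin n → α}
    (hf : Injective f) : ∃ σ : Equiv.Perm (Fin n), StrictAnti (f ∘ σ) :=
  ⟨Tuple.sort (OrderDual.toDual ∘ f), strictMono_toDual_comp_iff.1 <|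
    (Tuple.monotone_sort _).strictMono_of_injective <|
      (OrderDual.toDual.injective.comp hf).comp (Equiv.injective _)⟩

section Strata

variable {m n : ℕ} {z : Fin n → Fin m → ℕ} {xstar x : Fin m → ℝ}

theorem ratio_pos (hxs : ∀ l, 0 < xstar l) (hx : ∀ l, 0 < x l) (zv : Fin m → ℕ) :
    0 < ratio xstar x zv :=
  Finset.prod_pos fun l _ => pow_pos (div_pos (hx l) (hxs l)) _

theorem ratio_mul_exp (zv : Fin m → ℕ) (t : ℝ) (w : Fin m → ℝ) :
    ratio xstar (fun l => x l * Real.exp (t * w l)) zv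
      = ratio xstar x zv * Real.exp (t * ∑ l, (zv l : ℝ) * w l) := by
  simp only [ratio, mul_div_right_comm, mul_pow, ← Real.exp_nat_mul, Finset.prod_mul_distrib,
    ← Real.exp_sum, Finset.mul_sum]
  congr 2
  exact Finset.sum_congr rfl fun l _ => by ring

theorem exists_mem_stratum (hx : ∀ l, 0 < x l)
    (h : Injective fun i => ratio xstar x (z i)) : ∃ μ, x ∈ stratum z xstar μ := by
  obtain ⟨μ, hμ⟩ := exists_perm_strictAnti h
  exact ⟨μ, hx, fun i => hμ (Fin.mk_lt_mk.2 (Nat.lt_succ_self _))⟩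

theorem mem_closure_iUnion_stratum (hz : Injective z) (hxs : ∀ l, 0 < xstar l)
    (hx : ∀ l, 0 < x l) : x ∈ closure (⋃ μ, stratum z xstar μ) := by
  obtain ⟨w, hw⟩ := exists_weight_injective_sum_mul hz
  let γ : ℝ → Fin m → ℝ := fun t l => x l * Real.exp (t * w l)
  let S := {t : ℝ | ¬Injective fun i =>
    ratio xstar x (z i) * Real.exp (t * ∑ l, (z i l : ℝ) * w l)}
  have hS : Dense Sᶜ := (finite_setOf_not_injective_mul_exp
    (fun i => ratio_pos hxs hx (z i)) hw).countable.dense_compl ℝ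
  have hγS : γ '' Sᶜ ⊆ ⋃ μ, stratum z xstar μ := by
    rintro _ ⟨t, ht, rfl⟩
    refine Set.mem_iUnion.2 (exists_mem_stratum (fun l => mul_pos (hx l) (Real.exp_pos _)) ?_)
    simpa only [γ, ratio_mul_exp, S, Set.mem_compl_iff, Set.mem_ofPred_eq, not_not] using ht
  have hγ : Continuous γ := by fun_prop
  have hγ0 : γ 0 ∈ γ '' closure Sᶜ := ⟨0, hS.closure_eq ▸ Set.mem_univ _, rfl⟩
  simpa [γ] using closure_mono hγS (image_closure_subset_closure_image hγ hγ0)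

theorem exists_mem_closure_stratum (hz : Injective z) (hxs : ∀ l, 0 < xstar l)
    (hx : ∀ l, 0 ≤ x l) : ∃ μ, x ∈ closure (stratum z xstar μ) := by
  have hpos : x ∈ closure {y : Fin m → ℝ | ∀ l, 0 < y l} := by
    have : {y : Fin m → ℝ | ∀ l, 0 < y l} = Set.univ.pi fun _ => Set.Ioi 0 := by ext; simp
    rw [this, closure_pi_set]
    exact fun l _ => closure_Ioi (0 : ℝ) ▸ hx l
  have := closure_mono (fun y hy => mem_closure_iUnion_stratum hz hxs hy) hpos
  rw [closure_closure, closure_iUnion_of_finite] at this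
  exact Set.mem_iUnion.1 this

end Strata

theorem stmt10_general {m n : ℕ} (z : Fin n → Fin m → ℕ) (hz : Function.Injective z)
    (xstar : Fin m → ℝ) (hxs : ∀ l, 0 < xstar l)
    (I : Finset (Fin m)) :
    ∀ K : Set (Fin m → ℝ), K ⊆ LI I → IsCompact K →
      ∃ V : Set (Fin m → ℝ), IsOpen V ∧ K ⊆ V ∧
        ∀ x ∈ V, (∀ l, 0 ≤ x l) →
          ∃ μ : Equiv.Perm (Fin n), (closure (stratum z xstar μ) ∩ LI I).Nonempty ∧
            x ∈ closure (stratum z xstar μ) := by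
  intro K hK _
  let D := ⋃ (μ : Equiv.Perm (Fin n)) (_ : ¬(closure (stratum z xstar μ) ∩ LI I).Nonempty),
    closure (stratum z xstar μ)
  have hD : IsClosed D := (Set.toFinite _).isClosed_biUnion fun _ _ => isClosed_closure
  refine ⟨Dᶜ, hD.isOpen_compl, fun x hx hxD => ?_, fun x hxD hx => ?_⟩
  · obtain ⟨μ, hμ, hxμ⟩ := Set.mem_iUnion₂.1 hxD
    exact hμ ⟨x, hxμ, hK hx⟩
  · obtain ⟨μ, hμ⟩ := exists_mem_closure_stratum hz hxs hx
    exact ⟨μ, not_not.1 fun h => hxD (Set.mem_biUnion h hμ), hμ⟩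

/-- every compact subset `K` of `L_I` has a relatively open neighbourhood
`U` in `ℝ_{≥0}^m` contained in the union of the closures of the strata whose closure
meets `L_I`. -/
theorem stmt10 {m n : ℕ} (hn : 1 ≤ n) (z : Fin n → Fin m → ℕ) (hz : Function.Injective z)
    (xstar : Fin m → ℝ) (hxs : ∀ l, 0 < xstar l)
    (I : Finset (Fin m)) (hI : I.Nonempty) :
    ∀ K : Set (Fin m → ℝ), K ⊆ LI I → IsCompact K →
      ∃ V : Set (Fin m → ℝ), IsOpen V ∧ K ⊆ V ∧
        ∀ x ∈ V, (∀ l, 0 ≤ x l) →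
          ∃ μ : Equiv.Perm (Fin n), (closure (stratum z xstar μ) ∩ LI I).Nonempty ∧
            x ∈ closure (stratum z xstar μ) :=
  stmt10_general z hz xstar hxs I
end
end
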